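/- arXiv:1112.5070 — 4 statements merged into one kernel-verified Lean document; each statement's English description precedes it below -/
import Mathlib

section
/- Let (A, 𝒜, μ) be a σ-finite measure space, let C ≥ 2 and q ≥ 2 be integers, and let c_1, …, c_q be nonempty subsets of [C] = {1, …, C} such that each element of [C] belongs to exactly two of the sets c_i (so ⋃_i c_i = [C] and Σ_i |c_i| = 2C). For each i let h_i ∈ L²(μ^{|c_i|}). Then the function z ↦ Π_{i=1}^q h_i(z_{c_i}) is μ^C-integrable on A^C and |∫_{A^C} Π_{i=1}^q h_i(z_{c_i}) dμ^C(z)| ≤ Π_{i=1}^q ‖h_i‖_{L²(μ^{|c_i|})}. -/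
/-!
Integrate the variables out one at a time. A variable `x` occurs in exactly two factors, so
integrating in `x` only involves those two, and Cauchy–Schwarz in `x` bounds the result by the
product of their `L²` norms in `x`. The other factors are untouched, and the new family still
covers every remaining variable exactly twice; by induction on the number of variables, after all
of them are integrated out each factor has been replaced by its full `L²` norm.
-/

open MeasureTheory Finset Function
open scoped ENNReal

namespace MeasureTheory

section

variable {ι : Type*} [DecidableEq ι] {X : ι → Type*} [∀ i, MeasurableSpace (X i)]
  {μ : ∀ i, Measure (X i)}

theorem _root_.DependsOn.lmarginal {f : (Π i, X i) → ℝ≥0∞} {s : Set ι} (hf : DependsOn f s)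
    (t : Finset ι) : DependsOn (∫⋯∫⁻_t, f ∂μ) (s \ t) := by
  intro z z' hzz'
  refine lintegral_congr fun y => hf fun i hi => ?_
  by_cases hit : i ∈ t
  · simp only [updateFinset_def, dif_pos hit]
  · simp only [updateFinset_def, dif_neg hit, hzz' i ⟨hi, hit⟩]

variable (μ) in
noncomputable def l2Marginal (s : Finset ι) (f : (Π i, X i) → ℝ≥0∞) : (Π i, X i) → ℝ≥0∞ :=
  fun z => (∫⋯∫⁻_s, (fun w => f w ^ (2 : ℝ)) ∂μ) z ^ (1 / 2 : ℝ)

@[simp]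
theorem l2Marginal_empty (f : (Π i, X i) → ℝ≥0∞) : l2Marginal μ ∅ f = f := by
  ext z
  simp only [l2Marginal, lmarginal_empty, one_div, ENNReal.rpow_rpow_inv two_ne_zero]

theorem _root_.DependsOn.l2Marginal {f : (Π i, X i) → ℝ≥0∞} {s : Set ι} (hf : DependsOn f s)
    (t : Finset ι) : DependsOn (l2Marginal μ t f) (s \ t) := by
  have hsq : DependsOn (fun w => f w ^ (2 : ℝ)) s := fun z z' h => congrArg (· ^ (2 : ℝ)) (hf h)
  exact fun z z' h => congrArg (· ^ (1 / 2 : ℝ)) (hsq.lmarginal t h)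

theorem lmarginal_singleton_mul_le {f g : (Π i, X i) → ℝ≥0∞} (hf : Measurable f)
    (hg : Measurable g) (x : ι) (z : Π i, X i) :
    (∫⋯∫⁻_{x}, (fun w => f w * g w) ∂μ) z ≤ l2Marginal μ {x} f z * l2Marginal μ {x} g z := by
  simp only [l2Marginal, lmarginal_singleton]
  exact ENNReal.lintegral_mul_le_Lp_mul_Lq _ .two_two
    (hf.comp (measurable_update z)).aemeasurable (hg.comp (measurable_update z)).aemeasurable

theorem lmarginal_singleton_prod_le {κ : Type*} [Fintype κ] [DecidableEq κ]
    {f : κ → (Π i, X i) → ℝ≥0∞} {d : κ → Finset ι} (hf : ∀ k, Measurable (f k))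
    (hdep : ∀ k, DependsOn (f k) (d k)) {x : ι} (hx : #{k | x ∈ d k} = 2) (z : Π i, X i) :
    (∫⋯∫⁻_{x}, (fun w => ∏ k, f k w) ∂μ) z ≤
      ∏ k, if x ∈ d k then l2Marginal μ {x} (f k) z else f k z := by
  obtain ⟨k₁, k₂, hk, hpair⟩ := card_eq_two.mp hx
  have hfree : ∀ k ∈ ({k | x ∉ d k} : Finset κ), ∀ a, f k (update z x a) = f k z :=
    fun k hk a => hdep k fun i hi =>
      update_of_ne (by rintro rfl; exact (mem_filter.mp hk).2 hi) a z
  have hsplit : ∀ a, ∏ k, f k (update z x a) =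
      f k₁ (update z x a) * f k₂ (update z x a) * ∏ k ∈ {k | x ∉ d k}, f k z := fun a => by
    rw [← prod_filter_mul_prod_filter_not univ (fun k => x ∈ d k), hpair, prod_pair hk,
      prod_congr rfl fun k hk => hfree k hk a]
  calc (∫⋯∫⁻_{x}, (fun w => ∏ k, f k w) ∂μ) z
      = (∫⋯∫⁻_{x}, (fun w => f k₁ w * f k₂ w) ∂μ) z * ∏ k ∈ {k | x ∉ d k}, f k z := by
        simp only [lmarginal_singleton, hsplit]
        exact lintegral_mul_const _
          (((hf k₁).comp (measurable_update z)).mul ((hf k₂).comp (measurable_update z)))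
    _ ≤ l2Marginal μ {x} (f k₁) z * l2Marginal μ {x} (f k₂) z * ∏ k ∈ {k | x ∉ d k}, f k z := by
        gcongr
        exact lmarginal_singleton_mul_le (hf k₁) (hf k₂) x z
    _ = ∏ k, if x ∈ d k then l2Marginal μ {x} (f k) z else f k z := by
        rw [prod_ite, hpair, prod_pair hk]

variable [∀ i, SigmaFinite (μ i)]

theorem _root_.Measurable.l2Marginal {f : (Π i, X i) → ℝ≥0∞} (hf : Measurable f)
    (s : Finset ι) : Measurable (l2Marginal μ s f) :=
  ((hf.pow_const _).lmarginal μ).pow_const _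

theorem lmarginal_erase_lmarginal_singleton {f : (Π i, X i) → ℝ≥0∞} (hf : Measurable f)
    {s : Finset ι} {x : ι} (hx : x ∈ s) :
    ∫⋯∫⁻_s.erase x, ∫⋯∫⁻_{x}, f ∂μ ∂μ = ∫⋯∫⁻_s, f ∂μ := by
  rw [← lmarginal_union' μ f hf (disjoint_singleton_left.mpr (notMem_erase x s)),
    ← insert_eq, insert_erase hx]

theorem l2Marginal_erase_l2Marginal_singleton {f : (Π i, X i) → ℝ≥0∞} (hf : Measurable f)
    {s : Finset ι} {x : ι} (hx : x ∈ s) :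
    l2Marginal μ (s.erase x) (l2Marginal μ {x} f) = l2Marginal μ s f := by
  have hsq : (fun w => l2Marginal μ {x} f w ^ (2 : ℝ)) =
      ∫⋯∫⁻_{x}, (fun w => f w ^ (2 : ℝ)) ∂μ := by
    ext w
    simp only [l2Marginal, one_div, ENNReal.rpow_inv_rpow two_ne_zero]
  ext z
  simp only [l2Marginal] at hsq ⊢
  rw [hsq, lmarginal_erase_lmarginal_singleton (hf.pow_const _) hx]

theorem lmarginal_prod_le_prod_l2Marginal {κ : Type*} [Fintype κ] [DecidableEq κ]
    {s : Finset ι} {f : κ → (Π i, X i) → ℝ≥0∞} {d : κ → Finset ι} (hf : ∀ k, Measurable (f k))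
    (hdep : ∀ k, DependsOn (f k) (d k)) (hds : ∀ k, d k ⊆ s)
    (hcover : ∀ x ∈ s, #{k | x ∈ d k} = 2) :
    ∫⋯∫⁻_s, (fun z => ∏ k, f k z) ∂μ ≤ fun z => ∏ k, l2Marginal μ (d k) (f k) z := by
  induction s using Finset.induction_on generalizing f d with
  | empty =>
    have hd : ∀ k, d k = ∅ := fun k => subset_empty.mp (hds k)
    simp [hd]
  | insert x t hxt ih =>
    set g : κ → (Π i, X i) → ℝ≥0∞ :=
      fun k z => if x ∈ d k then l2Marginal μ {x} (f k) z else f k z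
    have hg : ∀ k, Measurable (g k) := fun k => by
      by_cases hk : x ∈ d k
      · simpa [g, hk] using (hf k).l2Marginal (μ := μ) {x}
      · simpa [g, hk] using hf k
    have hgdep : ∀ k, DependsOn (g k) ((d k).erase x) := fun k => by
      by_cases hk : x ∈ d k
      · simpa [g, hk, coe_erase] using (hdep k).l2Marginal (μ := μ) {x}
      · simpa [g, hk, erase_eq_of_notMem hk] using hdep k
    have hgd : ∀ k, (d k).erase x ⊆ t := fun k => by
      simpa [erase_insert hxt] using erase_subset_erase x (hds k)
    have hgcover : ∀ y ∈ t, #{k | y ∈ (d k).erase x} = 2 := fun y hy => by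
      have hyx : y ≠ x := ne_of_mem_of_not_mem hy hxt
      simpa [mem_erase, hyx] using hcover y (mem_insert_of_mem hy)
    have hl2 : ∀ k, l2Marginal μ ((d k).erase x) (g k) = l2Marginal μ (d k) (f k) := fun k => by
      by_cases hk : x ∈ d k
      · simpa [g, hk] using l2Marginal_erase_l2Marginal_singleton (μ := μ) (hf k) hk
      · simp [g, hk]
    intro z
    calc (∫⋯∫⁻_insert x t, (fun z => ∏ k, f k z) ∂μ) z
        = (∫⋯∫⁻_t, ∫⋯∫⁻_{x}, (fun z => ∏ k, f k z) ∂μ ∂μ) z := by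
          rw [← lmarginal_erase_lmarginal_singleton (measurable_fun_prod _ fun k _ => hf k)
            (mem_insert_self x t), erase_insert hxt]
      _ ≤ (∫⋯∫⁻_t, (fun z => ∏ k, g k z) ∂μ) z :=
          lmarginal_mono (lmarginal_singleton_prod_le hf hdep (hcover x (mem_insert_self x t))) z
      _ ≤ ∏ k, l2Marginal μ ((d k).erase x) (g k) z := ih hg hgdep hgd hgcover z
      _ = ∏ k, l2Marginal μ (d k) (f k) z := by simp only [hl2]

end

section

variable {ι : Type*} [Fintype ι] [DecidableEq ι] {X : ι → Type*} [∀ i, MeasurableSpace (X i)]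
  {μ : ∀ i, Measure (X i)} [∀ i, SigmaFinite (μ i)]

theorem quasiMeasurePreserving_finset_restrict (s : Finset ι) :
    Measure.QuasiMeasurePreserving s.restrict (Measure.pi μ) (Measure.pi fun i : s => μ i) := by
  convert Measure.quasiMeasurePreserving_fst.comp
    (measurePreserving_piEquivPiSubtypeProd μ (· ∈ s)).quasiMeasurePreserving
  rfl

theorem lintegral_prod_restrict_le_of_measurable {κ : Type*} [Fintype κ] [DecidableEq κ]
    {c : κ → Finset ι} (hcover : ∀ x, #{k | x ∈ c k} = 2)
    {g : (k : κ) → (Π i : c k, X i) → ℝ≥0∞} (hg : ∀ k, Measurable (g k)) :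
    ∫⁻ z, ∏ k, g k ((c k).restrict z) ∂Measure.pi μ ≤
      ∏ k, (∫⁻ y, g k y ^ (2 : ℝ) ∂Measure.pi fun i : c k => μ i) ^ (1 / 2 : ℝ) := by
  rcases isEmpty_or_nonempty (Π i, X i) with _ | ⟨⟨z⟩⟩
  · simp [lintegral_of_isEmpty]
  have key := lmarginal_prod_le_prod_l2Marginal (μ := μ) (s := univ)
    (fun k => (hg k).comp (measurable_restrict _))
    (fun k _ _ h => congrArg (g k) (dependsOn_restrict _ h)) (fun k => subset_univ _)
    (fun x _ => hcover x) z
  rw [lmarginal_univ] at key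
  simpa [l2Marginal, lmarginal, restrict_updateFinset] using key

theorem lintegral_prod_restrict_le {κ : Type*} [Fintype κ] [DecidableEq κ]
    {c : κ → Finset ι} (hcover : ∀ x, #{k | x ∈ c k} = 2)
    {g : (k : κ) → (Π i : c k, X i) → ℝ≥0∞}
    (hg : ∀ k, AEMeasurable (g k) (Measure.pi fun i : c k => μ i)) :
    ∫⁻ z, ∏ k, g k ((c k).restrict z) ∂Measure.pi μ ≤
      ∏ k, (∫⁻ y, g k y ^ (2 : ℝ) ∂Measure.pi fun i : c k => μ i) ^ (1 / 2 : ℝ) := by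
  have hae : ∀ᵐ z ∂Measure.pi μ, ∀ k, g k ((c k).restrict z) = (hg k).mk _ ((c k).restrict z) :=
    ae_all_iff.mpr fun k => (quasiMeasurePreserving_finset_restrict _).ae_eq (hg k).ae_eq_mk
  rw [lintegral_congr_ae (hae.mono fun z hz => prod_congr rfl fun k _ => hz k)]
  refine (lintegral_prod_restrict_le_of_measurable hcover fun k => (hg k).measurable_mk).trans_eq
    (prod_congr rfl fun k _ => ?_)
  exact congrArg (· ^ (1 / 2 : ℝ))
    (lintegral_congr_ae ((hg k).ae_eq_mk.symm.fun_comp (· ^ (2 : ℝ))))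

end

end MeasureTheory

theorem generalized_cauchy_schwarz_general
    {A : Type*} [MeasurableSpace A] (μ : Measure A) [SigmaFinite μ]
    (C q : ℕ)
    (c : Fin q → Finset (Fin C))
    (hcover : ∀ x : Fin C, (Finset.univ.filter fun i => x ∈ c i).card = 2)
    (h : (i : Fin q) → ({x // x ∈ c i} → A) → ℝ)
    (hL2 : ∀ i, MemLp (h i) 2 (Measure.pi fun _ : {x // x ∈ c i} => μ)) :
    Integrable (fun z : Fin C → A => ∏ i, h i fun x => z x.1)
      (Measure.pi fun _ : Fin C => μ) ∧
    |∫ z : Fin C → A, ∏ i, h i (fun x => z x.1) ∂(Measure.pi fun _ : Fin C => μ)|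
      ≤ ∏ i, (eLpNorm (h i) 2 (Measure.pi fun _ : {x // x ∈ c i} => μ)).toReal := by
  have hbound : ∫⁻ z, ‖∏ i, h i fun x => z x.1‖ₑ ∂(Measure.pi fun _ : Fin C => μ) ≤
      ∏ i, eLpNorm (h i) 2 (Measure.pi fun _ : {x // x ∈ c i} => μ) := by
    convert lintegral_prod_restrict_le (μ := fun _ => μ) hcover
      (fun i => (hL2 i).1.aemeasurable.enorm) using 2 with z i
    · simp only [enorm_eq_nnnorm, nnnorm_prod, ENNReal.ofNNReal_finsetProd]
      rfl
    · rw [eLpNorm_eq_lintegral_rpow_enorm_toReal two_ne_zero ENNReal.ofNat_ne_top]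
      simp
  have hfin : ∏ i, eLpNorm (h i) 2 (Measure.pi fun _ : {x // x ∈ c i} => μ) ≠ ∞ :=
    ENNReal.prod_ne_top fun i _ => (hL2 i).eLpNorm_ne_top
  refine ⟨⟨aestronglyMeasurable_fun_prod _ fun i _ => (hL2 i).1.comp_quasiMeasurePreserving
    (quasiMeasurePreserving_finset_restrict _), hbound.trans_lt hfin.lt_top⟩, ?_⟩
  rw [← Real.norm_eq_abs, ← toReal_enorm, ← ENNReal.toReal_prod]
  exact ENNReal.toReal_mono hfin ((enorm_integral_le_lintegral_enorm _).trans hbound)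

/-- **Generalized Cauchy–Schwarz inequality** (Lemma 2.3(i) of Nourdin–Rosiński).
Let `(A, 𝒜, μ)` be a σ-finite measure space, `C, q ≥ 2`, and `c 1, …, c q` nonempty
subsets of `[C]` such that each element of `[C]` belongs to exactly two of the `c i`.
If `h i ∈ L²(μ^{|c i|})` for each `i`, then `z ↦ ∏ i, h i (z restricted to c i)` is
`μ^C`-integrable and `|∫ ∏ i, h i (z_{c i}) dμ^C| ≤ ∏ i, ‖h i‖_{L²}`. -/
theorem generalized_cauchy_schwarz
    {A : Type*} [MeasurableSpace A] (μ : Measure A) [SigmaFinite μ]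
    (C q : ℕ) (hC : 2 ≤ C) (hq : 2 ≤ q)
    (c : Fin q → Finset (Fin C))
    (hne : ∀ i, (c i).Nonempty)
    (hcover : ∀ x : Fin C, (Finset.univ.filter fun i => x ∈ c i).card = 2)
    (h : (i : Fin q) → ({x // x ∈ c i} → A) → ℝ)
    (hL2 : ∀ i, MemLp (h i) 2 (Measure.pi fun _ : {x // x ∈ c i} => μ)) :
    Integrable (fun z : Fin C → A => ∏ i, h i fun x => z x.1)
      (Measure.pi fun _ : Fin C => μ) ∧
    |∫ z : Fin C → A, ∏ i, h i (fun x => z x.1) ∂(Measure.pi fun _ : Fin C => μ)|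
      ≤ ∏ i, (eLpNorm (h i) 2 (Measure.pi fun _ : {x // x ∈ c i} => μ)).toReal :=
  generalized_cauchy_schwarz_general μ C q c hcover h hL2
end

section
/- Let (A, 𝒜, μ) be a σ-finite measure space, let p, q ≥ 1 be integers, and let f ∈ L²(μ^p) and g ∈ L²(μ^q) be symmetric. Let σ be a permutation of {1, …, p+q} and let r be the cardinality of {1, …, p} ∩ {σ(p+1), …, σ(p+q)}. Then (i) r also equals the cardinality of {p+1, …, p+q} ∩ {σ(1), …, σ(p)}, and (ii) the function (t_1, …, t_{p+q}) ↦ f(t_1,…,t_p) g(t_{p+1},…,t_{p+q}) f(t_{σ(1)},…,t_{σ(p)}) g(t_{σ(p+1)},…,t_{σ(p+q)}) is μ^{p+q}-integrable with ∫_{A^{p+q}} f(t_1,…,t_p) g(t_{p+1},…,t_{p+q}) f(t_{σ(1)},…,t_{σ(p)}) g(t_{σ(p+1)},…,t_{σ(p+q)}) dμ(t_1)…dμ(t_{p+q}) = ‖f ⊗_r g‖². -/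
open MeasureTheory

/-- The contraction `f ⊗_r g` of `f ∈ L²(μ^p)` and `g ∈ L²(μ^q)`:
`(f ⊗_r g)(t₁,…,t_{p+q-2r}) = ∫_{A^r} f(t₁,…,t_{p-r},s₁,…,s_r)
  g(t_{p-r+1},…,t_{p+q-2r},s₁,…,s_r) dμ^r(s)`. -/
noncomputable def contraction {A : Type*} [MeasurableSpace A] (μ : Measure A)
    (p q r : ℕ) (f : (Fin p → A) → ℝ) (g : (Fin q → A) → ℝ) :
    (Fin ((p - r) + (q - r)) → A) → ℝ :=
  fun t => ∫ s : Fin r → A,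
      (f fun i => if h : (i : ℕ) < p - r then t (Fin.castAdd (q - r) ⟨i, h⟩)
        else s ⟨(i : ℕ) - (p - r), by have := i.isLt; omega⟩) *
      (g fun j => if h : (j : ℕ) < q - r then t (Fin.natAdd (p - r) ⟨j, h⟩)
        else s ⟨(j : ℕ) - (q - r), by have := j.isLt; omega⟩)
    ∂(Measure.pi fun _ : Fin r => μ)

/-- The tensor product `(f ⊗ g)(t₁,…,t_{p+q}) = f(t₁,…,t_p) g(t_{p+1},…,t_{p+q})`. -/
noncomputable def tensorProd {A : Type*} {p q : ℕ}
    (f : (Fin p → A) → ℝ) (g : (Fin q → A) → ℝ) : (Fin (p + q) → A) → ℝ :=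
  fun t => f (fun i => t (Fin.castAdd q i)) * g (fun j => t (Fin.natAdd p j))

/-- The symmetrization `h̃(t₁,…,t_m) = (1/m!) ∑_{σ ∈ S_m} h(t_{σ(1)},…,t_{σ(m)})`. -/
noncomputable def symmetrize {A : Type*} {m : ℕ} (h : (Fin m → A) → ℝ) :
    (Fin m → A) → ℝ :=
  fun t => (m.factorial : ℝ)⁻¹ * ∑ σ : Equiv.Perm (Fin m), h fun i => t (σ i)

/-!
Write `P = {i < p}` and `Q = σ(P)`. The classes `P ∩ Q`, `Pᶜ ∩ Qᶜ`, `P ∩ Qᶜ`, `Pᶜ ∩ Q` have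
`p - r`, `q - r`, `r`, `r` elements, so the coordinates can be renamed
`(x, y, s₁, s₂) ∈ A^(p-r) × A^(q-r) × A^r × A^r` class by class. By the symmetry of `f` and `g`
the integrand becomes `f(x,s₁) g(y,s₂) f(x,s₂) g(y,s₁) = F(t,s₁) F(t,s₂)`, where `t = (x,y)` and
`F(t,s) = f(x,s) g(y,s)`, and Fubini in `(s₁,s₂)` turns its integral into
`∫ (∫ F(t,s) ds)² dt = ‖f ⊗_r g‖²`. Integrability needs no symmetry: the integrand is
`(f ⊗ g)(u) · (f ⊗ g)(u ∘ σ)`, a product of two `L²` functions.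
-/

open Function Finset

section PiMeasure

variable {A : Type*} [MeasurableSpace A] (μ : Measure A) [SigmaFinite μ]

theorem quasiMeasurePreserving_comp_of_injective {ι κ : Type*} [Fintype ι] [Fintype κ]
    {e : ι → κ} (he : Injective e) :
    Measure.QuasiMeasurePreserving (fun w : κ → A => w ∘ e)
      (Measure.pi fun _ => μ) (Measure.pi fun _ => μ) := by
  classical
  let _ : Fintype (Set.range e) := Subtype.fintype _
  have hsplit := measurePreserving_piEquivPiSubtypeProd (fun _ : κ => μ) (· ∈ Set.range e)
  have hreindex := (measurePreserving_piCongrLeft (fun _ : Set.range e => μ)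
    (Equiv.ofInjective e he)).symm
  have : (fun w : κ → A => w ∘ e) = (MeasurableEquiv.piCongrLeft (fun _ => A)
      (Equiv.ofInjective e he)).symm ∘ Prod.fst ∘
      MeasurableEquiv.piEquivPiSubtypeProd (fun _ => A) (· ∈ Set.range e) := by
    funext w i
    simp [MeasurableEquiv.piCongrLeft, Equiv.piCongrLeft]
  rw [this]
  exact hreindex.quasiMeasurePreserving.comp
    (Measure.quasiMeasurePreserving_fst.comp hsplit.quasiMeasurePreserving)

theorem ae_comp_eq_of_forall_mem_range {ι κ β : Type*} [Fintype ι] [Fintype κ]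
    {f : (ι → A) → β}
    (hf : ∀ π : Equiv.Perm ι, ∀ᵐ t ∂(Measure.pi fun _ => μ), f (fun i => t (π i)) = f t)
    {u v : ι → κ} (hu : Injective u) (hv : Injective v) (huv : ∀ i, u i ∈ Set.range v) :
    ∀ᵐ w ∂(Measure.pi fun _ : κ => μ), f (fun i => w (u i)) = f (fun i => w (v i)) := by
  choose π hπ using huv
  have hπ_inj : Injective π := fun i j h => hu (by rw [← hπ i, ← hπ j, h])
  let π' := Equiv.ofBijective π (Finite.injective_iff_bijective.mp hπ_inj)
  filter_upwards [(quasiMeasurePreserving_comp_of_injective μ hv).ae (hf π')] with w hw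
  simpa [π', hπ, Function.comp_def] using hw

theorem measurePreserving_comp_equiv {ι κ : Type*} [Fintype ι] [Fintype κ] (e : ι ≃ κ) :
    MeasurePreserving (fun u : κ → A => fun i => u (e i))
      (Measure.pi fun _ => μ) (Measure.pi fun _ => μ) :=
  (measurePreserving_piCongrLeft (fun _ => μ) e).symm _

theorem measurePreserving_castAdd_natAdd (p q : ℕ) :
    MeasurePreserving
      (fun u : Fin (p + q) → A => ((fun i => u (Fin.castAdd q i)), fun j => u (Fin.natAdd p j)))
      (Measure.pi fun _ => μ) ((Measure.pi fun _ => μ).prod (Measure.pi fun _ => μ)) :=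
  (measurePreserving_sumPiEquivProdPi fun _ => μ).comp
    (measurePreserving_comp_equiv μ finSumFinEquiv)

theorem memLp_two_tensorProd {p q : ℕ} {f : (Fin p → A) → ℝ} {g : (Fin q → A) → ℝ}
    (hf : MemLp f 2 (Measure.pi fun _ => μ)) (hg : MemLp g 2 (Measure.pi fun _ => μ)) :
    MemLp (tensorProd f g) 2 (Measure.pi fun _ => μ) := by
  have hprod : MemLp (fun z : (Fin p → A) × (Fin q → A) => f z.1 * g z.2) 2
      ((Measure.pi fun _ => μ).prod (Measure.pi fun _ => μ)) := by
    refine (memLp_two_iff_integrable_sq (hf.1.comp_fst.mul hg.1.comp_snd)).2 ?_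
    simpa only [Pi.mul_apply, mul_pow] using hf.integrable_sq.mul_prod hg.integrable_sq
  exact hprod.comp_measurePreserving (measurePreserving_castAdd_natAdd μ p q)

theorem integrable_perm_product {p q : ℕ} {f : (Fin p → A) → ℝ} {g : (Fin q → A) → ℝ}
    (hf : MemLp f 2 (Measure.pi fun _ => μ)) (hg : MemLp g 2 (Measure.pi fun _ => μ))
    (σ : Equiv.Perm (Fin (p + q))) :
    Integrable (fun u : Fin (p + q) → A =>
      f (fun i => u (Fin.castAdd q i)) * g (fun j => u (Fin.natAdd p j)) *
        f (fun i => u (σ (Fin.castAdd q i))) * g (fun j => u (σ (Fin.natAdd p j))))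
      (Measure.pi fun _ => μ) := by
  have hT := memLp_two_tensorProd μ hf hg
  refine (hT.integrable_mul (hT.comp_measurePreserving (measurePreserving_comp_equiv μ σ))).congr
    (ae_of_all _ fun u => ?_)
  simp only [Pi.mul_apply, comp_apply, tensorProd, mul_assoc]

variable {ι₁ ι₂ ι₃ ι : Type*}

def piEquivProdProd (e : ι₁ ⊕ (ι₂ ⊕ ι₃) ≃ ι) :
    (ι → A) ≃ᵐ (ι₁ → A) × ((ι₂ → A) × (ι₃ → A)) :=
  (MeasurableEquiv.piCongrLeft (fun _ => A) e).symm.trans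
    ((MeasurableEquiv.sumPiEquivProdPi fun _ => A).trans
      (MeasurableEquiv.prodCongr (.refl _) (MeasurableEquiv.sumPiEquivProdPi fun _ => A)))

theorem piEquivProdProd_apply (e : ι₁ ⊕ (ι₂ ⊕ ι₃) ≃ ι) (u : ι → A) :
    piEquivProdProd e u =
      (fun x => u (e (.inl x)), fun x => u (e (.inr (.inl x))), fun x => u (e (.inr (.inr x)))) :=
  rfl

theorem measurePreserving_piEquivProdProd [Fintype ι₁] [Fintype ι₂] [Fintype ι₃] [Fintype ι]
    (e : ι₁ ⊕ (ι₂ ⊕ ι₃) ≃ ι) :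
    MeasurePreserving (piEquivProdProd e) (Measure.pi fun _ => μ)
      ((Measure.pi fun _ => μ).prod ((Measure.pi fun _ => μ).prod (Measure.pi fun _ => μ))) :=
  ((MeasurePreserving.id _).prod (measurePreserving_sumPiEquivProdPi fun _ => μ)).comp
    ((measurePreserving_sumPiEquivProdPi fun _ => μ).comp (measurePreserving_comp_equiv μ e))

end PiMeasure

theorem integral_mul_sections_eq_integral_sq {T S : Type*} [MeasurableSpace T] [MeasurableSpace S]
    {ν : Measure T} {ρ : Measure S} [SigmaFinite ν] [SigmaFinite ρ] (F : T × S → ℝ)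
    (hF : Integrable (fun z : T × (S × S) => F (z.1, z.2.1) * F (z.1, z.2.2))
      (ν.prod (ρ.prod ρ))) :
    ∫ z, F (z.1, z.2.1) * F (z.1, z.2.2) ∂(ν.prod (ρ.prod ρ)) = ∫ t, (∫ s, F (t, s) ∂ρ) ^ 2 ∂ν := by
  rw [integral_prod _ hF]
  refine integral_congr_ae (ae_of_all _ fun t => ?_)
  exact (integral_prod_mul (fun s => F (t, s)) (fun s => F (t, s))).trans (sq _).symm

section Counting

theorem card_filter_fst_eq {J : Type*} [Fintype J] (c : J → Bool × Bool) (b : Bool) :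
    #{y | (c y).1 = b} = #{y | c y = (b, true)} + #{y | c y = (b, false)} := by
  rw [card_filter, card_filter, card_filter, ← sum_add_distrib]
  refine sum_congr rfl fun y _ => ?_
  rcases c y with ⟨_ | _, _ | _⟩ <;> cases b <;> rfl

theorem card_filter_snd_eq {J : Type*} [Fintype J] (c : J → Bool × Bool) (b : Bool) :
    #{y | (c y).2 = b} = #{y | c y = (true, b)} + #{y | c y = (false, b)} := by
  rw [card_filter, card_filter, card_filter, ← sum_add_distrib]
  refine sum_congr rfl fun y _ => ?_
  rcases c y with ⟨_ | _, _ | _⟩ <;> cases b <;> rfl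

theorem card_filter_perm_symm {α : Type*} [Fintype α] (σ : Equiv.Perm α) (P : α → Prop)
    [DecidablePred P] : #{y | P (σ.symm y)} = #{y | P y} := by
  rw [card_filter, card_filter]
  exact Equiv.sum_comp σ.symm fun y => if P y then 1 else 0

theorem filter_inter_image_perm {α : Type*} [Fintype α] [DecidableEq α] (σ : Equiv.Perm α)
    (P Q : α → Prop) [DecidablePred P] [DecidablePred Q] :
    univ.filter P ∩ (univ.filter Q).image (fun i => σ i) =
      univ.filter fun y => P y ∧ Q (σ.symm y) := by
  ext y
  simp only [mem_inter, mem_filter, mem_image, mem_univ, true_and]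
  exact and_congr_right fun _ =>
    ⟨fun ⟨x, hx, hxy⟩ => by rwa [← hxy, Equiv.symm_apply_apply], fun h => ⟨_, h, by simp⟩⟩

variable (p q r : ℕ)

/-- Whether position `y` is read by the first `f` of the integrand, and whether it is read by the
second `f`. -/
def blockType {m : ℕ} (σ : Equiv.Perm (Fin m)) (y : Fin m) : Bool × Bool :=
  (decide ((y : ℕ) < p), decide ((σ.symm y : ℕ) < p))

/-- The same data for the coordinates `(t, s₁, s₂)` of the model integrand
`f(x,s₁) g(y,s₂) f(x,s₂) g(y,s₁)`, where `t = (x, y)`. -/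
def modelBlockType : Fin ((p - r) + (q - r)) ⊕ (Fin r ⊕ Fin r) → Bool × Bool :=
  Sum.elim (Fin.addCases (fun _ => (true, true)) (fun _ => (false, false)))
    (Sum.elim (fun _ => (true, false)) (fun _ => (false, true)))

theorem card_modelBlockType (v : Bool × Bool) :
    #{x | modelBlockType p q r x = v} =
      (if v = (true, true) then p - r else 0) + (if v = (false, false) then q - r else 0) +
      ((if v = (true, false) then r else 0) + (if v = (false, true) then r else 0)) := by
  rw [card_filter]
  simp only [Fintype.sum_sum_type, Fin.sum_univ_add, modelBlockType, Sum.elim_inl,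
    Sum.elim_inr, Fin.addCases_left, Fin.addCases_right]
  rcases v with ⟨_ | _, _ | _⟩ <;> simp

variable {p q r}

theorem card_blockType_eq (σ : Equiv.Perm (Fin (p + q)))
    (hr : #{y | blockType p σ y = (true, false)} = r) (v : Bool × Bool) :
    #{y | blockType p σ y = v} = #{x | modelBlockType p q r x = v} := by
  have hP : #{y : Fin (p + q) | (blockType p σ y).1 = true} = p := by
    simp [blockType, Fin.card_filter_val_lt]
  have hPc : #{y : Fin (p + q) | (blockType p σ y).1 = false} = q := by
    have := card_filter_add_card_filter_not (s := univ) fun y : Fin (p + q) => (y : ℕ) < p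
    simp_all [blockType, Fin.card_filter_val_lt]
  have hQ : #{y : Fin (p + q) | (blockType p σ y).2 = true} = p := by
    simpa [blockType, Fin.card_filter_val_lt] using card_filter_perm_symm σ fun y => (y : ℕ) < p
  have := card_filter_fst_eq (blockType p σ) true
  have := card_filter_fst_eq (blockType p σ) false
  have := card_filter_snd_eq (blockType p σ) true
  rw [card_modelBlockType]
  rcases v with ⟨_ | _, _ | _⟩ <;>
    simp only [Prod.mk.injEq, Bool.false_eq_true, Bool.true_eq_false, and_self, and_true,
      and_false, ↓reduceIte, zero_add, add_zero] <;> omega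

theorem exists_equiv_blockType (σ : Equiv.Perm (Fin (p + q)))
    (hr : #{y | blockType p σ y = (true, false)} = r) :
    ∃ τ : Fin ((p - r) + (q - r)) ⊕ (Fin r ⊕ Fin r) ≃ Fin (p + q),
      ∀ x, blockType p σ (τ x) = modelBlockType p q r x :=
  ⟨.ofFiberEquiv fun v => Fintype.equivOfCardEq <| by
      rw [Fintype.card_subtype, Fintype.card_subtype, card_blockType_eq σ hr],
    Equiv.ofFiberEquiv_map _⟩

theorem mem_range_of_blockType_fst (σ : Equiv.Perm (Fin (p + q))) (y : Fin (p + q)) :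
    ((blockType p σ y).1 = true → y ∈ Set.range (Fin.castAdd q)) ∧
      ((blockType p σ y).1 = false → y ∈ Set.range (Fin.natAdd p)) := by
  simp only [blockType, decide_eq_true_eq, decide_eq_false_iff_not, Fin.range_natAdd,
    Set.mem_ofPred_eq, not_lt]
  exact ⟨fun h => ⟨⟨y, h⟩, rfl⟩, id⟩

theorem mem_range_of_blockType_snd (σ : Equiv.Perm (Fin (p + q))) (y : Fin (p + q)) :
    ((blockType p σ y).2 = true → y ∈ Set.range fun i => σ (Fin.castAdd q i)) ∧
      ((blockType p σ y).2 = false → y ∈ Set.range fun j => σ (Fin.natAdd p j)) := by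
  obtain ⟨hP, hPc⟩ := mem_range_of_blockType_fst σ (σ.symm y)
  refine ⟨fun h => ?_, fun h => ?_⟩
  · obtain ⟨i, hi⟩ := hP h
    exact ⟨i, by simp [hi]⟩
  · obtain ⟨j, hj⟩ := hPc h
    exact ⟨j, by simp [hj]⟩

end Counting

section ContractionModel

variable (p q r : ℕ)

def contractionIndexLeft : Fin p → Fin ((p - r) + (q - r)) ⊕ Fin r := fun i =>
  if h : (i : ℕ) < p - r then .inl (Fin.castAdd (q - r) ⟨i, h⟩)
  else .inr ⟨i - (p - r), by have := i.isLt; omega⟩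

def contractionIndexRight : Fin q → Fin ((p - r) + (q - r)) ⊕ Fin r := fun j =>
  if h : (j : ℕ) < q - r then .inl (Fin.natAdd (p - r) ⟨j, h⟩)
  else .inr ⟨j - (q - r), by have := j.isLt; omega⟩

theorem contractionIndexLeft_injective : Injective (contractionIndexLeft p q r) := by
  intro i j h
  simp only [contractionIndexLeft] at h
  split_ifs at h <;> simp [Fin.ext_iff] at h <;> omega

theorem contractionIndexRight_injective : Injective (contractionIndexRight p q r) := by
  intro i j h
  simp only [contractionIndexRight] at h
  split_ifs at h <;> simp [Fin.ext_iff] at h <;> omega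

noncomputable def contractionIntegrand {A : Type*} (f : (Fin p → A) → ℝ) (g : (Fin q → A) → ℝ)
    (z : (Fin ((p - r) + (q - r)) → A) × (Fin r → A)) : ℝ :=
  f (fun i => Sum.elim z.1 z.2 (contractionIndexLeft p q r i)) *
    g (fun j => Sum.elim z.1 z.2 (contractionIndexRight p q r j))

theorem contraction_eq_integral_contractionIntegrand {A : Type*} [MeasurableSpace A]
    (μ : Measure A) (f : (Fin p → A) → ℝ) (g : (Fin q → A) → ℝ)
    (t : Fin ((p - r) + (q - r)) → A) :
    contraction μ p q r f g t =
      ∫ s, contractionIntegrand p q r f g (t, s) ∂(Measure.pi fun _ => μ) := by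
  unfold contraction contractionIntegrand contractionIndexLeft contractionIndexRight
  congr 1
  funext s
  congr 2 <;> funext i <;> split_ifs <;> rfl

theorem contractionIntegrand_mul_contractionIntegrand {A : Type*} (f : (Fin p → A) → ℝ)
    (g : (Fin q → A) → ℝ) (w : Fin ((p - r) + (q - r)) ⊕ (Fin r ⊕ Fin r) → A) :
    contractionIntegrand p q r f g (fun x => w (.inl x), fun x => w (.inr (.inl x))) *
        contractionIntegrand p q r f g (fun x => w (.inl x), fun x => w (.inr (.inr x))) =
      f (fun i => w (Sum.map id .inl (contractionIndexLeft p q r i))) *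
          g (fun j => w (Sum.map id .inr (contractionIndexRight p q r j))) *
        f (fun i => w (Sum.map id .inr (contractionIndexLeft p q r i))) *
          g (fun j => w (Sum.map id .inl (contractionIndexRight p q r j))) := by
  have hs₁ (x) : w (Sum.map id .inl x) =
      Sum.elim (fun x => w (.inl x)) (fun x => w (.inr (.inl x))) x := by
    cases x <;> rfl
  have hs₂ (x) : w (Sum.map id .inr x) =
      Sum.elim (fun x => w (.inl x)) (fun x => w (.inr (.inr x))) x := by
    cases x <;> rfl
  simp only [contractionIntegrand, hs₁, hs₂]
  ring

theorem modelBlockType_contractionIndexLeft (i : Fin p) :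
    (modelBlockType p q r (Sum.map id .inl (contractionIndexLeft p q r i))).1 = true ∧
      (modelBlockType p q r (Sum.map id .inr (contractionIndexLeft p q r i))).2 = true := by
  unfold contractionIndexLeft
  split_ifs <;> simp only [modelBlockType, Sum.map_inl, Sum.map_inr, Sum.elim_inl, Sum.elim_inr,
    id, Fin.addCases_left, and_self]

theorem modelBlockType_contractionIndexRight (j : Fin q) :
    (modelBlockType p q r (Sum.map id .inr (contractionIndexRight p q r j))).1 = false ∧
      (modelBlockType p q r (Sum.map id .inl (contractionIndexRight p q r j))).2 = false := by
  unfold contractionIndexRight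
  split_ifs <;> simp only [modelBlockType, Sum.map_inl, Sum.map_inr, Sum.elim_inl, Sum.elim_inr,
    id, Fin.addCases_right, and_self]

end ContractionModel

theorem perm_product_ae_eq_contractionIntegrand_mul {A : Type*} [MeasurableSpace A]
    (μ : Measure A) [SigmaFinite μ] {p q r : ℕ} {f : (Fin p → A) → ℝ} {g : (Fin q → A) → ℝ}
    (hfsymm : ∀ π : Equiv.Perm (Fin p),
      ∀ᵐ t ∂(Measure.pi fun _ : Fin p => μ), f (fun i => t (π i)) = f t)
    (hgsymm : ∀ π : Equiv.Perm (Fin q),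
      ∀ᵐ t ∂(Measure.pi fun _ : Fin q => μ), g (fun i => t (π i)) = g t)
    (σ : Equiv.Perm (Fin (p + q))) (τ : Fin ((p - r) + (q - r)) ⊕ (Fin r ⊕ Fin r) ≃ Fin (p + q))
    (hτ : ∀ x, blockType p σ (τ x) = modelBlockType p q r x) :
    (fun u : Fin (p + q) → A =>
      f (fun i => u (Fin.castAdd q i)) * g (fun j => u (Fin.natAdd p j)) *
        f (fun i => u (σ (Fin.castAdd q i))) * g (fun j => u (σ (Fin.natAdd p j))))
      =ᵐ[Measure.pi fun _ => μ] fun u =>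
        contractionIntegrand p q r f g ((piEquivProdProd τ u).1, (piEquivProdProd τ u).2.1) *
          contractionIntegrand p q r f g ((piEquivProdProd τ u).1, (piEquivProdProd τ u).2.2) := by
  have hL := contractionIndexLeft_injective p q r
  have hR := contractionIndexRight_injective p q r
  have hinl : Injective (Sum.map id .inl : _ → Fin ((p - r) + (q - r)) ⊕ (Fin r ⊕ Fin r)) :=
    Sum.map_injective.2 ⟨injective_id, Sum.inl_injective⟩
  have hinr : Injective (Sum.map id .inr : _ → Fin ((p - r) + (q - r)) ⊕ (Fin r ⊕ Fin r)) :=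
    Sum.map_injective.2 ⟨injective_id, Sum.inr_injective⟩
  have hblock {n : ℕ} {h : (Fin n → A) → ℝ} (hsymm : ∀ π : Equiv.Perm (Fin n),
      ∀ᵐ t ∂(Measure.pi fun _ : Fin n => μ), h (fun i => t (π i)) = h t)
      {a : Fin n → Fin ((p - r) + (q - r)) ⊕ (Fin r ⊕ Fin r)} {b : Fin n → Fin (p + q)}
      (ha : Injective a) (hb : Injective b) (hab : ∀ i, τ (a i) ∈ Set.range b) :
      ∀ᵐ u ∂(Measure.pi fun _ => μ), h (fun i => u (τ (a i))) = h (fun i => u (b i)) :=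
    ae_comp_eq_of_forall_mem_range μ hsymm (τ.injective.comp ha) hb hab
  -- `τ` sends the model coordinates of each factor onto the positions that factor reads.
  filter_upwards [
    hblock hfsymm (hinl.comp hL) (Fin.castAdd_injective p q) fun i =>
      (mem_range_of_blockType_fst σ _).1 <| by
        rw [hτ]; exact (modelBlockType_contractionIndexLeft p q r i).1,
    hblock hgsymm (hinr.comp hR) (Fin.natAdd_injective q p) fun j =>
      (mem_range_of_blockType_fst σ _).2 <| by
        rw [hτ]; exact (modelBlockType_contractionIndexRight p q r j).1,
    hblock hfsymm (hinr.comp hL) (σ.injective.comp (Fin.castAdd_injective p q)) fun i =>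
      (mem_range_of_blockType_snd σ _).1 <| by
        rw [hτ]; exact (modelBlockType_contractionIndexLeft p q r i).2,
    hblock hgsymm (hinl.comp hR) (σ.injective.comp (Fin.natAdd_injective q p)) fun j =>
      (mem_range_of_blockType_snd σ _).2 <| by
        rw [hτ]; exact (modelBlockType_contractionIndexRight p q r j).2]
    with u h₁ h₂ h₃ h₄
  simp only [comp_apply] at h₁ h₂ h₃ h₄
  rw [← h₁, ← h₂, ← h₃, ← h₄, piEquivProdProd_apply]
  exact (contractionIntegrand_mul_contractionIntegrand p q r f g fun x => u (τ x)).symm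

theorem integral_perm_product_eq_norm_sq_contraction_general
    {A : Type*} [MeasurableSpace A] (μ : Measure A) [SigmaFinite μ]
    (p q : ℕ)
    (f : (Fin p → A) → ℝ) (g : (Fin q → A) → ℝ)
    (hf : MemLp f 2 (Measure.pi fun _ : Fin p => μ))
    (hg : MemLp g 2 (Measure.pi fun _ : Fin q => μ))
    (hfsymm : ∀ σ : Equiv.Perm (Fin p),
      ∀ᵐ t ∂(Measure.pi fun _ : Fin p => μ), f (fun i => t (σ i)) = f t)
    (hgsymm : ∀ σ : Equiv.Perm (Fin q),
      ∀ᵐ t ∂(Measure.pi fun _ : Fin q => μ), g (fun i => t (σ i)) = g t)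
    (σ : Equiv.Perm (Fin (p + q))) (r : ℕ)
    (hr : r = ((Finset.univ.filter fun i : Fin (p + q) => (i : ℕ) < p) ∩
        (Finset.univ.filter fun i : Fin (p + q) => p ≤ (i : ℕ)).image (fun i => σ i)).card) :
    r = ((Finset.univ.filter fun i : Fin (p + q) => p ≤ (i : ℕ)) ∩
        (Finset.univ.filter fun i : Fin (p + q) => (i : ℕ) < p).image (fun i => σ i)).card
    ∧ Integrable
        (fun t : Fin (p + q) → A =>
          f (fun i => t (Fin.castAdd q i)) * g (fun j => t (Fin.natAdd p j)) *
            f (fun i => t (σ (Fin.castAdd q i))) * g (fun j => t (σ (Fin.natAdd p j))))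
        (Measure.pi fun _ : Fin (p + q) => μ)
    ∧ (∫ t : Fin (p + q) → A,
          f (fun i => t (Fin.castAdd q i)) * g (fun j => t (Fin.natAdd p j)) *
            f (fun i => t (σ (Fin.castAdd q i))) * g (fun j => t (σ (Fin.natAdd p j)))
          ∂(Measure.pi fun _ : Fin (p + q) => μ))
        = ∫ x : Fin ((p - r) + (q - r)) → A, (contraction μ p q r f g x) ^ 2
            ∂(Measure.pi fun _ : Fin ((p - r) + (q - r)) => μ) := by
  classical
  have hTF : #{y | blockType p σ y = (true, false)} = r := by
    rw [hr, filter_inter_image_perm]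
    congr 1; ext y; simp [blockType]
  have hFT : #{y | blockType p σ y = (false, true)} = r := by
    rw [card_blockType_eq σ hTF, card_modelBlockType]; simp
  obtain ⟨τ, hτ⟩ := exists_equiv_blockType σ hTF
  have hΦ := measurePreserving_piEquivProdProd μ τ
  have hmodel := perm_product_ae_eq_contractionIntegrand_mul μ hfsymm hgsymm σ τ hτ
  have hint := integrable_perm_product μ hf hg σ
  refine ⟨?_, hint, ?_⟩
  · rw [filter_inter_image_perm, ← hFT]
    congr 1; ext y; simp [blockType]
  · set F := contractionIntegrand p q r f g
    have hF := (hΦ.integrable_comp_emb (g := fun z => F (z.1, z.2.1) * F (z.1, z.2.2))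
      (piEquivProdProd τ).measurableEmbedding).1 ((integrable_congr hmodel).1 hint)
    rw [integral_congr_ae hmodel, hΦ.integral_comp' fun z => F (z.1, z.2.1) * F (z.1, z.2.2),
      integral_mul_sections_eq_integral_sq F hF]
    simp only [F, contraction_eq_integral_contractionIntegrand]

/-- **Identity (2.8) of Nourdin–Rosiński**: for symmetric `f ∈ L²(μ^p)`, `g ∈ L²(μ^q)`,
a permutation `σ` of `{1,…,p+q}`, and `r` the cardinality of
`{1,…,p} ∩ {σ(p+1),…,σ(p+q)}`: (i) `r` also equals the cardinality of
`{p+1,…,p+q} ∩ {σ(1),…,σ(p)}`, and (ii) the function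
`t ↦ f(t₁,…,t_p) g(t_{p+1},…,t_{p+q}) f(t_{σ(1)},…,t_{σ(p)}) g(t_{σ(p+1)},…,t_{σ(p+q)})`
is `μ^{p+q}`-integrable with integral `‖f ⊗_r g‖²`. -/
theorem integral_perm_product_eq_norm_sq_contraction
    {A : Type*} [MeasurableSpace A] (μ : Measure A) [SigmaFinite μ]
    (p q : ℕ) (hp : 1 ≤ p) (hq : 1 ≤ q)
    (f : (Fin p → A) → ℝ) (g : (Fin q → A) → ℝ)
    (hf : MemLp f 2 (Measure.pi fun _ : Fin p => μ))
    (hg : MemLp g 2 (Measure.pi fun _ : Fin q => μ))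
    (hfsymm : ∀ σ : Equiv.Perm (Fin p),
      ∀ᵐ t ∂(Measure.pi fun _ : Fin p => μ), f (fun i => t (σ i)) = f t)
    (hgsymm : ∀ σ : Equiv.Perm (Fin q),
      ∀ᵐ t ∂(Measure.pi fun _ : Fin q => μ), g (fun i => t (σ i)) = g t)
    (σ : Equiv.Perm (Fin (p + q))) (r : ℕ)
    (hr : r = ((Finset.univ.filter fun i : Fin (p + q) => (i : ℕ) < p) ∩
        (Finset.univ.filter fun i : Fin (p + q) => p ≤ (i : ℕ)).image (fun i => σ i)).card) :
    r = ((Finset.univ.filter fun i : Fin (p + q) => p ≤ (i : ℕ)) ∩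
        (Finset.univ.filter fun i : Fin (p + q) => (i : ℕ) < p).image (fun i => σ i)).card
    ∧ Integrable
        (fun t : Fin (p + q) → A =>
          f (fun i => t (Fin.castAdd q i)) * g (fun j => t (Fin.natAdd p j)) *
            f (fun i => t (σ (Fin.castAdd q i))) * g (fun j => t (σ (Fin.natAdd p j))))
        (Measure.pi fun _ : Fin (p + q) => μ)
    ∧ (∫ t : Fin (p + q) → A,
          f (fun i => t (Fin.castAdd q i)) * g (fun j => t (Fin.natAdd p j)) *
            f (fun i => t (σ (Fin.castAdd q i))) * g (fun j => t (σ (Fin.natAdd p j)))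
          ∂(Measure.pi fun _ : Fin (p + q) => μ))
        = ∫ x : Fin ((p - r) + (q - r)) → A, (contraction μ p q r f g x) ^ 2
            ∂(Measure.pi fun _ : Fin ((p - r) + (q - r)) => μ) :=
  integral_perm_product_eq_norm_sq_contraction_general μ p q f g hf hg hfsymm hgsymm σ r hr
end

section
/- Let p, q ≥ 1 be integers and let 0 ≤ r ≤ p∧q. The number of permutations σ of the set {1, …, p+q} such that the cardinality of {1, …, p} ∩ {σ(p+1), …, σ(p+q)} equals r is exactly p! · C(p,r) · q! · C(q,r), where C(n,r) denotes the binomial coefficient. -/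
open Finset
open scoped Nat

/-! With `B = {p+1, …, p+q}` we have `{1, …, p} = Bᶜ`, so the condition only depends on
`S = σ(B)`: it says `|S \ B| = r`. A set `S` with `|S| = |B|` and `|S \ B| = r` is obtained from
`B` by removing `r` of its elements and adding `r` elements of `Bᶜ`, which gives `C(q,r) C(p,r)`
choices; for each of them, the permutations with `σ(B) = S` are the pairs of bijections `B ≃ S`,
`Bᶜ ≃ Sᶜ`, of which there are `q! p!`. -/

theorem Finset.card_filter_card_eq_and_card_sdiff_eq {α : Type*} [Fintype α] [DecidableEq α]
    (B : Finset α) (r : ℕ) :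
    #{S : Finset α | #S = #B ∧ #(S \ B) = r} = (#Bᶜ).choose r * (#B).choose r := by
  rw [← card_powersetCard r Bᶜ, ← card_powersetCard r B, ← card_product]
  refine card_nbij' (fun S => (S \ B, B \ S)) (fun TU => (B \ TU.2) ∪ TU.1) ?_ ?_ ?_ ?_
  · intro S
    simp only [mem_coe, mem_filter, mem_univ, true_and, mem_product, mem_powersetCard]
    rintro ⟨hS, hr⟩
    exact ⟨⟨by grind [mem_compl], hr⟩, sdiff_subset, by rw [← card_sdiff_comm hS, hr]⟩
  · rintro ⟨T, U⟩
    simp only [mem_coe, mem_filter, mem_univ, true_and, mem_product, mem_powersetCard]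
    rintro ⟨⟨hT, hr⟩, hU, hr'⟩
    have hdisj : Disjoint (B \ U) T := by grind [disjoint_left, mem_compl]
    have hTB : (B \ U ∪ T) \ B = T := by ext; grind [mem_compl]
    rw [card_union_of_disjoint hdisj, card_sdiff_of_subset hU, hTB]
    have := card_le_card hU
    omega
  · intro S _
    grind
  · rintro ⟨T, U⟩
    simp only [mem_coe, mem_product, mem_powersetCard]
    rintro ⟨⟨hT, -⟩, hU, -⟩
    refine Prod.ext ?_ ?_ <;> ext <;> grind [mem_compl]

namespace Equiv

variable {α : Type*}

def subtypeCongrEquiv {p q : α → Prop} [DecidablePred p] [DecidablePred q] :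
    {σ : Perm α // ∀ a, p a ↔ q (σ a)} ≃
      ({a // p a} ≃ {a // q a}) × ({a // ¬p a} ≃ {a // ¬q a}) where
  toFun σ := (σ.1.subtypeEquiv σ.2, σ.1.subtypeEquiv fun a => not_congr (σ.2 a))
  invFun f := ⟨subtypeCongr f.1 f.2, fun a => by
    by_cases ha : p a
    · simp [subtypeCongr, ha, sumCompl_symm_apply_of_pos, (f.1 ⟨a, ha⟩).2]
    · simp [subtypeCongr, ha, sumCompl_symm_apply_of_neg, (f.2 ⟨a, ha⟩).2]⟩
  left_inv σ := by
    ext a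
    by_cases ha : p a <;> simp [subtypeCongr, ha, sumCompl_symm_apply_of_pos,
      sumCompl_symm_apply_of_neg]
  right_inv f := by
    ext ⟨a, ha⟩ <;> simp [subtypeCongr, ha, sumCompl_symm_apply_of_pos,
      sumCompl_symm_apply_of_neg]

namespace Perm

variable [DecidableEq α]

theorem image_eq_iff_forall_mem_iff (σ : Perm α) (B S : Finset α) :
    B.image σ = S ↔ ∀ a, a ∈ B ↔ σ a ∈ S := by
  constructor
  · rintro rfl a
    simp
  · intro h
    ext y
    simp only [mem_image, h]
    exact ⟨fun ⟨a, ha, hay⟩ => hay ▸ ha,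
      fun hy => ⟨σ.symm y, by simpa using hy, σ.apply_symm_apply y⟩⟩

variable [Fintype α]

theorem card_filter_image_eq (B S : Finset α) (h : #B = #S) :
    #{σ : Perm α | B.image σ = S} = (#B)! * (#Bᶜ)! := by
  have hcompl : Fintype.card {a // a ∉ B} = Fintype.card {a // a ∉ S} := by
    simp [Fintype.card_subtype_compl, h]
  simp_rw [image_eq_iff_forall_mem_iff]
  rw [← Fintype.card_subtype, Fintype.card_congr subtypeCongrEquiv, Fintype.card_prod,
    Fintype.card_equiv (Fintype.equivOfCardEq (by simpa using h)),
    Fintype.card_equiv (Fintype.equivOfCardEq hcompl)]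
  simp [Fintype.card_subtype_compl, card_compl]

theorem card_filter_image_mem (B : Finset α) (T : Finset (Finset α))
    (hT : ∀ S ∈ T, #S = #B) :
    #{σ : Perm α | B.image σ ∈ T} = #T * ((#B)! * (#Bᶜ)!) := by
  rw [card_eq_sum_card_fiberwise (f := fun σ : Perm α => B.image σ) (t := T)
    fun σ hσ => by simpa using hσ]
  refine sum_const_nat fun S hS => ?_
  rw [filter_filter, ← card_filter_image_eq B S (hT S hS).symm]
  congr 1
  exact filter_congr fun σ _ => ⟨And.right, fun h => ⟨h ▸ hS, h⟩⟩

end Perm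

end Equiv

theorem card_perms_with_intersection_card_general
    (p q r : ℕ) :
    (Finset.univ.filter fun σ : Equiv.Perm (Fin (p + q)) =>
        ((Finset.univ.filter fun i : Fin (p + q) => (i : ℕ) < p) ∩
          (Finset.univ.filter fun i : Fin (p + q) => p ≤ (i : ℕ)).image
            (fun i => σ i)).card = r).card
      = p.factorial * p.choose r * (q.factorial * q.choose r) := by
  set B : Finset (Fin (p + q)) := univ.filter fun i => p ≤ (i : ℕ)
  have hA : (univ.filter fun i : Fin (p + q) => (i : ℕ) < p) = Bᶜ := by ext; simp [B]
  have hBc : #Bᶜ = p := by simp [← hA, Fin.card_filter_val_lt]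
  have hB : #B = q := by have := card_add_card_compl B; simp only [Fintype.card_fin] at this; omega
  set T : Finset (Finset (Fin (p + q))) := {S | #S = #B ∧ #(S \ B) = r}
  calc _ = #{σ : Equiv.Perm (Fin (p + q)) | B.image σ ∈ T} := by
        refine congrArg card (filter_congr fun σ _ => ?_)
        simp [T, hA, card_image_of_injective _ σ.injective, sdiff_eq_inter_compl, inter_comm]
    _ = #T * ((#B)! * (#Bᶜ)!) := Equiv.Perm.card_filter_image_mem B T (by simp +contextual [T])
    _ = _ := by
      rw [card_filter_card_eq_and_card_sdiff_eq, hB, hBc]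
      ring

/-- **Permutation count of Nourdin–Rosiński, proof of Lemma 2.2(1)**: for integers
`p, q ≥ 1` and `0 ≤ r ≤ p ∧ q`, the number of permutations `σ` of `{1,…,p+q}` such
that `|{1,…,p} ∩ {σ(p+1),…,σ(p+q)}| = r` equals `p! C(p,r) q! C(q,r)`. -/
theorem card_perms_with_intersection_card
    (p q r : ℕ) (hp : 1 ≤ p) (hq : 1 ≤ q) (hr : r ≤ min p q) :
    (Finset.univ.filter fun σ : Equiv.Perm (Fin (p + q)) =>
        ((Finset.univ.filter fun i : Fin (p + q) => (i : ℕ) < p) ∩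
          (Finset.univ.filter fun i : Fin (p + q) => p ≤ (i : ℕ)).image
            (fun i => σ i)).card = r).card
      = p.factorial * p.choose r * (q.factorial * q.choose r) :=
  card_perms_with_intersection_card_general p q r
end

section
/- Let d ≥ 1 and let F = (F_1, …, F_d) and G = (G_1, …, G_d) be independent and identically distributed ℝ^d-valued random vectors with E[F_i] = 0 for all i and E[‖F‖⁴] < ∞, where ‖·‖ is the Euclidean norm on ℝ^d. Then (1/2) Cov(‖F+G‖², ‖F−G‖²) = E[‖F‖⁴] − (E[‖F‖²])² − 2 Σ_{i,j=1}^d Cov(F_i, F_j)². -/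
open MeasureTheory ProbabilityTheory

/-!
With `A = ‖F‖² + ‖G‖²` and `Q = ⟨F, G⟩` we have `‖F ± G‖² = A ± 2Q`, so
`Cov(‖F+G‖², ‖F-G‖²) = Var A - 4 Var Q`. Independence and equal laws give
`Var A = 2 Var ‖F‖² = 2 (E‖F‖⁴ - (E‖F‖²)²)`, and, since `F` is centered, `E Q = 0` and
`E Q² = ∑_{i,j} E[F_i F_j] E[G_i G_j] = ∑_{i,j} Cov(F_i, F_j)²`.
-/

section DotProduct

variable {ι : Type*} [Fintype ι] (x y : ι → ℝ)

theorem sum_add_sq_eq :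
    ∑ i, (x i + y i) ^ 2 = ∑ i, x i ^ 2 + ∑ i, y i ^ 2 + 2 * (x ⬝ᵥ y) := by
  simp only [dotProduct, Finset.mul_sum, ← Finset.sum_add_distrib]
  exact Finset.sum_congr rfl fun i _ => by ring

theorem sum_sub_sq_eq :
    ∑ i, (x i - y i) ^ 2 = ∑ i, x i ^ 2 + ∑ i, y i ^ 2 - 2 * (x ⬝ᵥ y) := by
  simp only [dotProduct, Finset.mul_sum, ← Finset.sum_add_distrib, ← Finset.sum_sub_distrib]
  exact Finset.sum_congr rfl fun i _ => by ring

theorem dotProduct_sq_eq_sum_sum :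
    (x ⬝ᵥ y) ^ 2 = ∑ i, ∑ j, x i * x j * (y i * y j) := by
  simp only [dotProduct, sq, Finset.sum_mul_sum]
  exact Finset.sum_congr rfl fun i _ => Finset.sum_congr rfl fun j _ => by ring

end DotProduct

namespace ProbabilityTheory

variable {Ω : Type*} [MeasurableSpace Ω] {μ : Measure Ω}

theorem covariance_add_sub [IsFiniteMeasure μ] {X Y : Ω → ℝ} (hX : MemLp X 2 μ)
    (hY : MemLp Y 2 μ) : cov[X + Y, X - Y; μ] = Var[X; μ] - Var[Y; μ] := by
  rw [covariance_add_left hX hY (hX.sub hY), covariance_sub_right hX hX hY,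
    covariance_sub_right hY hX hY, covariance_self hX.aemeasurable,
    covariance_self hY.aemeasurable, covariance_comm X Y]
  ring

theorem IndepFun.memLp_two_mul {X Y : Ω → ℝ} (h : X ⟂ᵢ[μ] Y) (hX : MemLp X 2 μ)
    (hY : MemLp Y 2 μ) : MemLp (X * Y) 2 μ := by
  have hXY2 : (fun ω => X ω ^ 2) ⟂ᵢ[μ] (fun ω => Y ω ^ 2) :=
    h.comp (measurable_id.pow_const 2) (measurable_id.pow_const 2)
  refine (memLp_two_iff_integrable_sq (hX.1.mul hY.1)).2 ?_
  simpa only [Pi.mul_def, mul_pow] using hXY2.integrable_mul hX.integrable_sq hY.integrable_sq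

theorem IndepFun.variance_add_of_identDistrib {X Y : Ω → ℝ} (h : X ⟂ᵢ[μ] Y)
    (hid : IdentDistrib X Y μ μ) (hX : MemLp X 2 μ) : Var[X + Y; μ] = 2 * Var[X; μ] := by
  rw [h.variance_add hX (hid.memLp_iff.1 hX), ← hid.variance_eq, two_mul]

variable {ι : Type*} [Fintype ι] {X Y : Ω → ι → ℝ}

theorem memLp_two_sum_sq_of_integrable_sq (hX : AEMeasurable X μ)
    (h4 : Integrable (fun ω => (∑ i, X ω i ^ 2) ^ 2) μ) :
    MemLp (fun ω => ∑ i, X ω i ^ 2) 2 μ :=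
  (memLp_two_iff_integrable_sq (by fun_prop)).2 h4

theorem memLp_two_apply_of_integrable_sum_sq (hX : AEMeasurable X μ)
    (h2 : Integrable (fun ω => ∑ i, X ω i ^ 2) μ) (i : ι) : MemLp (fun ω => X ω i) 2 μ := by
  refine (memLp_two_iff_integrable_sq (by fun_prop)).2 (h2.mono' (by fun_prop) ?_)
  refine Filter.Eventually.of_forall fun ω => ?_
  rw [Real.norm_of_nonneg (sq_nonneg _)]
  exact Finset.single_le_sum (f := fun j => X ω j ^ 2) (fun j _ => sq_nonneg _)
    (Finset.mem_univ i)

theorem IndepFun.memLp_two_dotProduct (h : X ⟂ᵢ[μ] Y) (hX : ∀ i, MemLp (fun ω => X ω i) 2 μ)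
    (hY : ∀ i, MemLp (fun ω => Y ω i) 2 μ) : MemLp (fun ω => X ω ⬝ᵥ Y ω) 2 μ :=
  memLp_finsetSum _ fun i _ =>
    (h.comp (measurable_pi_apply i) (measurable_pi_apply i)).memLp_two_mul (hX i) (hY i)

theorem IndepFun.integral_dotProduct (h : X ⟂ᵢ[μ] Y)
    (hX : ∀ i, Integrable (fun ω => X ω i) μ) (hY : ∀ i, Integrable (fun ω => Y ω i) μ) :
    ∫ ω, X ω ⬝ᵥ Y ω ∂μ = ∑ i, (∫ ω, X ω i ∂μ) * ∫ ω, Y ω i ∂μ := by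
  have hXY i : (fun ω => X ω i) ⟂ᵢ[μ] (fun ω => Y ω i) :=
    h.comp (measurable_pi_apply i) (measurable_pi_apply i)
  have hint i : Integrable (fun ω => X ω i * Y ω i) μ := (hXY i).integrable_mul (hX i) (hY i)
  simp only [dotProduct]
  rw [integral_finsetSum _ fun i _ => hint i]
  exact Finset.sum_congr rfl fun i _ =>
    (hXY i).integral_fun_mul_eq_mul_integral (hX i).1 (hY i).1

theorem IndepFun.integral_dotProduct_sq (h : X ⟂ᵢ[μ] Y)
    (hX : ∀ i j, Integrable (fun ω => X ω i * X ω j) μ)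
    (hY : ∀ i j, Integrable (fun ω => Y ω i * Y ω j) μ) :
    ∫ ω, (X ω ⬝ᵥ Y ω) ^ 2 ∂μ
      = ∑ i, ∑ j, (∫ ω, X ω i * X ω j ∂μ) * ∫ ω, Y ω i * Y ω j ∂μ := by
  have hXY i j : (fun ω => X ω i * X ω j) ⟂ᵢ[μ] (fun ω => Y ω i * Y ω j) :=
    h.comp ((measurable_pi_apply i).mul (measurable_pi_apply j))
      ((measurable_pi_apply i).mul (measurable_pi_apply j))
  have hint i j : Integrable (fun ω => X ω i * X ω j * (Y ω i * Y ω j)) μ :=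
    (hXY i j).integrable_mul (hX i j) (hY i j)
  simp_rw [dotProduct_sq_eq_sum_sum]
  rw [integral_finsetSum _ fun i _ => integrable_finsetSum _ fun j _ => hint i j]
  refine Finset.sum_congr rfl fun i _ => ?_
  rw [integral_finsetSum _ fun j _ => hint i j]
  exact Finset.sum_congr rfl fun j _ =>
    (hXY i j).integral_fun_mul_eq_mul_integral (hX i j).1 (hY i j).1

theorem IndepFun.variance_dotProduct [IsProbabilityMeasure μ] (h : X ⟂ᵢ[μ] Y)
    (hid : IdentDistrib X Y μ μ) (hmean : ∀ i, ∫ ω, X ω i ∂μ = 0)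
    (hX : ∀ i, MemLp (fun ω => X ω i) 2 μ) :
    Var[fun ω => X ω ⬝ᵥ Y ω; μ] = ∑ i, ∑ j, (∫ ω, X ω i * X ω j ∂μ) ^ 2 := by
  have hidi i : IdentDistrib (fun ω => X ω i) (fun ω => Y ω i) μ μ :=
    hid.comp (measurable_pi_apply i)
  have hidij i j : IdentDistrib (fun ω => X ω i * X ω j) (fun ω => Y ω i * Y ω j) μ μ :=
    hid.comp (f := X) (u := fun x => x i * x j) (by fun_prop)
  have hY i := (hidi i).memLp_iff.1 (hX i)
  have hXX i j := (hX i).integrable_mul (hX j)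
  rw [variance_eq_sub (h.memLp_two_dotProduct hX hY)]
  simp only [Pi.pow_apply]
  rw [h.integral_dotProduct_sq hXX fun i j => (hidij i j).integrable_iff.1 (hXX i j),
    h.integral_dotProduct (fun i => (hX i).integrable one_le_two)
      fun i => (hY i).integrable one_le_two]
  simp only [← (hidij _ _).integral_eq, hmean, zero_mul, Finset.sum_const_zero, sq]
  ring

end ProbabilityTheory

open ProbabilityTheory

theorem cov_norm_sq_sum_diff_general
    {Ω : Type*} [MeasurableSpace Ω] (P : Measure Ω) [IsProbabilityMeasure P]
    (d : ℕ)
    (F G : Ω → (Fin d → ℝ))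
    (hindep : IndepFun F G P) (hid : IdentDistrib F G P P)
    (hmean : ∀ i, ∫ ω, F ω i ∂P = 0)
    (hmom : Integrable (fun ω => (∑ i, F ω i ^ 2) ^ 2) P) :
    (1 / 2 : ℝ) *
        ((∫ ω, (∑ i, (F ω i + G ω i) ^ 2) * (∑ i, (F ω i - G ω i) ^ 2) ∂P)
          - (∫ ω, ∑ i, (F ω i + G ω i) ^ 2 ∂P) * (∫ ω, ∑ i, (F ω i - G ω i) ^ 2 ∂P))
      = (∫ ω, (∑ i, F ω i ^ 2) ^ 2 ∂P) - (∫ ω, ∑ i, F ω i ^ 2 ∂P) ^ 2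
        - 2 * ∑ i, ∑ j,
            ((∫ ω, F ω i * F ω j ∂P) - (∫ ω, F ω i ∂P) * (∫ ω, F ω j ∂P)) ^ 2 := by
  have hsq : Measurable fun x : Fin d → ℝ => ∑ i, x i ^ 2 := by fun_prop
  have hSF := memLp_two_sum_sq_of_integrable_sq hid.aemeasurable_fst hmom
  have hSG : MemLp (fun ω => ∑ i, G ω i ^ 2) 2 P := (hid.comp hsq).memLp_iff.1 hSF
  have hFi :=
    memLp_two_apply_of_integrable_sum_sq hid.aemeasurable_fst (hSF.integrable one_le_two)
  have hSFG : (fun ω => ∑ i, F ω i ^ 2) ⟂ᵢ[P] (fun ω => ∑ i, G ω i ^ 2) := hindep.comp hsq hsq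
  have hA := hSF.add hSG
  have hQ := (hindep.memLp_two_dotProduct hFi fun i =>
    (hid.comp (measurable_pi_apply i)).memLp_iff.1 (hFi i)).const_mul 2
  have hcov := covariance_eq_sub (hA.add hQ) (hA.sub hQ)
  have hU : (fun ω => ∑ i, F ω i ^ 2) + (fun ω => ∑ i, G ω i ^ 2)
      + (fun ω => 2 * (F ω ⬝ᵥ G ω)) = fun ω => ∑ i, (F ω i + G ω i) ^ 2 :=
    funext fun ω => (sum_add_sq_eq _ _).symm
  have hV : (fun ω => ∑ i, F ω i ^ 2) + (fun ω => ∑ i, G ω i ^ 2)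
      - (fun ω => 2 * (F ω ⬝ᵥ G ω)) = fun ω => ∑ i, (F ω i - G ω i) ^ 2 :=
    funext fun ω => (sum_sub_sq_eq _ _).symm
  rw [hU, hV] at hcov
  simp only [Pi.mul_apply] at hcov
  rw [← hcov, ← hU, ← hV, covariance_add_sub hA hQ,
    hSFG.variance_add_of_identDistrib (hid.comp hsq) hSF,
    variance_const_mul, hindep.variance_dotProduct hid hmean hFi, variance_eq_sub hSF]
  simp only [Pi.pow_apply, hmean, zero_mul, sub_zero]
  ring

/-- **Covariance identity for `‖F+G‖², ‖F-G‖²`** (proof of Theorem 4.2 of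
Nourdin–Rosiński): if `F` and `G` are i.i.d. centered `ℝ^d`-valued random vectors
with `E[‖F‖⁴] < ∞`, then
`(1/2) Cov(‖F+G‖², ‖F-G‖²) = E[‖F‖⁴] - (E[‖F‖²])² - 2 ∑_{i,j} Cov(F_i,F_j)²`. -/
theorem cov_norm_sq_sum_diff
    {Ω : Type*} [MeasurableSpace Ω] (P : Measure Ω) [IsProbabilityMeasure P]
    (d : ℕ) (hd : 1 ≤ d)
    (F G : Ω → (Fin d → ℝ)) (hF : Measurable F) (hG : Measurable G)
    (hindep : IndepFun F G P) (hid : IdentDistrib F G P P)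
    (hmean : ∀ i, ∫ ω, F ω i ∂P = 0)
    (hmom : Integrable (fun ω => (∑ i, F ω i ^ 2) ^ 2) P) :
    (1 / 2 : ℝ) *
        ((∫ ω, (∑ i, (F ω i + G ω i) ^ 2) * (∑ i, (F ω i - G ω i) ^ 2) ∂P)
          - (∫ ω, ∑ i, (F ω i + G ω i) ^ 2 ∂P) * (∫ ω, ∑ i, (F ω i - G ω i) ^ 2 ∂P))
      = (∫ ω, (∑ i, F ω i ^ 2) ^ 2 ∂P) - (∫ ω, ∑ i, F ω i ^ 2 ∂P) ^ 2
        - 2 * ∑ i, ∑ j,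
            ((∫ ω, F ω i * F ω j ∂P) - (∫ ω, F ω i ∂P) * (∫ ω, F ω j ∂P)) ^ 2 :=
  cov_norm_sq_sum_diff_general P d F G hindep hid hmean hmom
end
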